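/- arXiv:2006.09460 — 3 statements merged into one kernel-verified Lean document; each statement's English description precedes it below -/
import Mathlib

section
/- Let Z be an exponential random variable with mean one, and let h : [0,∞) → R be a function such that the integrals below are well defined (e.g. h bounded and measurable). Define, for w > 0, f(w) = −(e^w / w)·∫_w^∞ (h(x) − E h(Z))·e^{−x} dx. Then f solves the differential equation w·f'(w) − (w − 1)·f(w) = h(w) − E h(Z) for all w > 0. -/
open MeasureTheory Set

/- Near `w > 0` the tail integral `T(u) = ∫_u^∞ φ(x) e^{-x} dx` is a constant minus a primitive,
so `T' = -φ e^{-·}`. Differentiating `f = -(e^u / u) T` then gives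
`w f'(w) = -(w - 1)(e^w / w) T(w) + φ(w) = (w - 1) f(w) + φ(w)`,
and `φ = h - E h(Z)` is bounded and continuous, so every integral involved converges. -/

/-- The mean of `h` under the exponential distribution with mean one,
`E h(Z) = ∫₀^∞ h(x) e^{-x} dx`. -/
noncomputable def expMean (h : ℝ → ℝ) : ℝ := ∫ x in Set.Ioi (0 : ℝ), h x * Real.exp (-x)

/-- The solution of the Stein equation for the exponential distribution:
`f(w) = -(e^w / w) · ∫_w^∞ (h(x) - E h(Z)) e^{-x} dx`. -/
noncomputable def steinSol (h : ℝ → ℝ) (w : ℝ) : ℝ :=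
  -(Real.exp w / w) * ∫ x in Set.Ioi w, (h x - expMean h) * Real.exp (-x)

theorem integrableOn_Ioi_mul_exp_neg {φ : ℝ → ℝ} (hφ : AEStronglyMeasurable φ)
    {M : ℝ} (hM : ∀ x, |φ x| ≤ M) (a : ℝ) :
    IntegrableOn (fun x => φ x * Real.exp (-x)) (Ioi a) := by
  have hexp : IntegrableOn (fun x => Real.exp (-x)) (Ioi a) := by
    simpa using exp_neg_integrableOn_Ioi a one_pos
  exact hexp.bdd_mul hφ.restrict (ae_of_all _ hM)

theorem hasDerivAt_integral_Ioi {g : ℝ → ℝ} (hg : Continuous g) {a w : ℝ}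
    (hint : IntegrableOn g (Ioi a)) (haw : a < w) :
    HasDerivAt (fun u => ∫ x in Ioi u, g x) (-g w) w := by
  have htail : (fun u => ∫ x in Ioi u, g x) =ᶠ[nhds w]
      fun u => (∫ x in Ioi a, g x) - ∫ x in a..u, g x := by
    filter_upwards [eventually_gt_nhds haw] with u hau
    rw [← intervalIntegral.integral_Ioi_sub_Ioi hint hau.le, sub_sub_cancel]
  have hprim := (hg.integral_hasStrictDerivAt a w).hasDerivAt
  simpa using (hprim.const_sub _).congr_of_eventuallyEq htail

theorem exists_hasDerivAt_mul_integral_Ioi_mul_exp_neg {φ : ℝ → ℝ} (hφ : Continuous φ)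
    {a w : ℝ} (hint : IntegrableOn (fun x => φ x * Real.exp (-x)) (Ioi a)) (haw : a < w)
    (hw : w ≠ 0) :
    ∃ f' : ℝ,
      HasDerivAt (fun u => -(Real.exp u / u) * ∫ x in Ioi u, φ x * Real.exp (-x)) f' w ∧
      w * f' - (w - 1) * (-(Real.exp w / w) * ∫ x in Ioi w, φ x * Real.exp (-x)) = φ w := by
  have hT : HasDerivAt (fun u => ∫ x in Ioi u, φ x * Real.exp (-x)) (-(φ w * Real.exp (-w))) w :=
    hasDerivAt_integral_Ioi (by fun_prop) hint haw
  have hq : HasDerivAt (fun u => Real.exp u / u) ((Real.exp w * w - Real.exp w * 1) / w ^ 2) w :=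
    (Real.hasDerivAt_exp w).div (hasDerivAt_id w) hw
  refine ⟨_, hq.neg.mul hT, ?_⟩
  have hexp : Real.exp w * Real.exp (-w) = 1 := by rw [← Real.exp_add, add_neg_cancel, Real.exp_zero]
  simp only [Pi.neg_apply]
  field_simp
  linear_combination (w * φ w) * hexp

/-- the function `f = steinSol h` solves the Stein equation
`w f'(w) - (w - 1) f(w) = h(w) - E h(Z)` for all `w > 0`. -/
theorem steinSol_solves_steinEquation (h : ℝ → ℝ) (hcont : Continuous h)
    (hbdd : ∃ M : ℝ, ∀ x : ℝ, |h x| ≤ M) :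
    ∀ w : ℝ, 0 < w → ∃ f' : ℝ,
      HasDerivAt (steinSol h) f' w ∧
      w * f' - (w - 1) * steinSol h w = h w - expMean h := by
  obtain ⟨M, hM⟩ := hbdd
  have hφ : Continuous fun x => h x - expMean h := hcont.sub continuous_const
  have hφM : ∀ x, |h x - expMean h| ≤ M + |expMean h| := fun x =>
    (abs_sub _ _).trans (add_le_add_left (hM x) _)
  exact fun w hw => exists_hasDerivAt_mul_integral_Ioi_mul_exp_neg hφ
    (integrableOn_Ioi_mul_exp_neg hφ.aestronglyMeasurable hφM 0) hw hw.ne'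
end

section
/- Let Z be an exponential random variable with mean one, and let h : [0,∞) → R be absolutely continuous with ‖h'‖_∞ < ∞ (i.e. h is Lipschitz with constant ‖h'‖_∞). Define, for w > 0, f(w) = −(e^w / w)·∫_w^∞ (h(x) − E h(Z))·e^{−x} dx. Then sup_{w>0} |f(w)| ≤ (1 + 2/e)·‖h'‖_∞ and sup_{w>0} |f'(w)| ≤ 2·‖h'‖_∞. -/
open MeasureTheory Set

/-! Lipschitz continuity gives `|h a - E h(Z)| ≤ L E|a - Z| = L (a - 1 + 2 e^{-a})`. Since
`h - E h(Z)` integrates to zero against `e^{-x}`, also `f w = (e^w / w) ∫₀^w (h - E h(Z)) e^{-x}`,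
and `f` solves the Stein equation `w f' = (w - 1) f + (h w - E h(Z))`.

For `w > 1`, integrating the moment bound over `(w, ∞)` gives `|f w| ≤ L (1 + 2 e^{-w} / w)`, which
bounds `f` and, through the Stein equation, `f'`. For `w ≤ 1` the moment bound is at most `L`, so
the integral over `(0, w)` gives `|f w| ≤ (e - 1) L`. For `f'` near `0` one subtracts
`(h w - E h(Z)) (1 - e^{-w})` from that integral: the remainder is at most `L w (1 - e^{-w})`,
small enough to absorb the `1 / w²` in `f'`. -/

open Real Filter Topology

lemma exp_mul_le_one_sub_add_mul_exp (y : ℝ) {t : ℝ} (ht₀ : 0 ≤ t) (ht₁ : t ≤ 1) :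
    rexp (t * y) ≤ 1 - t + t * rexp y := by
  have := convexOn_exp.2 (mem_univ 0) (mem_univ y) (sub_nonneg.2 ht₁) ht₀ (by ring)
  simpa using this

lemma exp_one_sub_one_le_one_add_two_div_exp_one : rexp 1 - 1 ≤ 1 + 2 / rexp 1 := by
  rw [← sub_le_iff_le_add', le_div_iff₀ (exp_pos 1)]
  nlinarith [exp_one_lt_d9, exp_one_gt_two]

lemma integral_exp_neg (w : ℝ) : ∫ x in (0 : ℝ)..w, rexp (-x) = 1 - rexp (-w) := by
  simp [intervalIntegral.integral_comp_neg (fun x => rexp x)]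

lemma hasDerivAt_sub_add_one_mul_exp_neg (a x : ℝ) :
    HasDerivAt (fun y => (y - a + 1) * rexp (-y)) ((a - x) * rexp (-x)) x :=
  ((((hasDerivAt_id x).sub_const a).add_const 1).mul (hasDerivAt_neg x).exp).congr_deriv
    (by simp only [id]; ring)

lemma tendsto_sub_add_one_mul_exp_neg_atTop (a : ℝ) :
    Tendsto (fun y => (y - a + 1) * rexp (-y)) atTop (𝓝 0) := by
  have h₁ : Tendsto (fun y => y * rexp (-y)) atTop (𝓝 0) := by
    simpa using tendsto_pow_mul_exp_neg_atTop_nhds_zero 1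
  have := h₁.add (tendsto_exp_neg_atTop_nhds_zero.const_mul (1 - a))
  rw [mul_zero, add_zero] at this
  exact this.congr fun y => by ring

lemma integral_sub_mul_exp_neg (a : ℝ) :
    ∫ x in (0 : ℝ)..a, (a - x) * rexp (-x) = a - 1 + rexp (-a) := by
  rw [intervalIntegral.integral_eq_sub_of_hasDerivAt
    (fun x _ => hasDerivAt_sub_add_one_mul_exp_neg a x)
    (Continuous.intervalIntegrable (by fun_prop) _ _)]
  simp only [neg_zero, exp_zero]
  ring

lemma hasDerivAt_neg_sub_add_one_mul_exp_neg (a x : ℝ) :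
    HasDerivAt (fun y => -((y - a + 1) * rexp (-y))) ((x - a) * rexp (-x)) x :=
  (hasDerivAt_sub_add_one_mul_exp_neg a x).neg.congr_deriv (by ring)

lemma integrableOn_Ioi_sub_mul_exp_neg (a : ℝ) :
    IntegrableOn (fun x => (x - a) * rexp (-x)) (Ioi a) :=
  integrableOn_Ioi_deriv_of_nonneg' (fun x _ => hasDerivAt_neg_sub_add_one_mul_exp_neg a x)
    (fun _ hx => mul_nonneg (sub_nonneg.2 hx.out.le) (exp_pos _).le)
    (tendsto_sub_add_one_mul_exp_neg_atTop a).neg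

lemma integral_Ioi_sub_mul_exp_neg (a : ℝ) :
    ∫ x in Ioi a, (x - a) * rexp (-x) = rexp (-a) := by
  rw [integral_Ioi_of_hasDerivAt_of_nonneg'
    (fun x _ => hasDerivAt_neg_sub_add_one_mul_exp_neg a x)
    (fun _ hx => mul_nonneg (sub_nonneg.2 hx.out.le) (exp_pos _).le)
    (by simpa using (tendsto_sub_add_one_mul_exp_neg_atTop a).neg)]
  simp

lemma abs_sub_mul_exp_neg_eqOn_Ioi (a : ℝ) :
    EqOn (fun t => |a - t| * rexp (-t)) (fun t => (t - a) * rexp (-t)) (Ioi a) := fun t ht => by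
  simp only [abs_sub_comm a t, abs_of_pos (sub_pos.2 ht.out)]

lemma abs_sub_mul_exp_neg_eqOn_Icc (a : ℝ) :
    EqOn (fun t => |a - t| * rexp (-t)) (fun t => (a - t) * rexp (-t)) (Icc 0 a) := fun t ht => by
  simp only [abs_of_nonneg (sub_nonneg.2 ht.2)]

lemma integrableOn_abs_sub_mul_exp_neg {a : ℝ} (ha : 0 ≤ a) :
    IntegrableOn (fun t => |a - t| * rexp (-t)) (Ioi 0) := by
  rw [← Ioc_union_Ioi_eq_Ioi ha]
  exact (Continuous.integrableOn_Ioc (by fun_prop)).union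
    ((integrableOn_Ioi_sub_mul_exp_neg a).congr_fun (abs_sub_mul_exp_neg_eqOn_Ioi a).symm
      measurableSet_Ioi)

lemma integral_abs_sub_mul_exp_neg {a : ℝ} (ha : 0 ≤ a) :
    ∫ t in Ioi 0, |a - t| * rexp (-t) = a - 1 + 2 * rexp (-a) := by
  have hIoc : ∫ t in Ioc 0 a, |a - t| * rexp (-t) = a - 1 + rexp (-a) := by
    rw [← intervalIntegral.integral_of_le ha, ← integral_sub_mul_exp_neg,
      intervalIntegral.integral_congr
        ((abs_sub_mul_exp_neg_eqOn_Icc a).mono (uIcc_of_le ha).subset)]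
  have hIoi : ∫ t in Ioi a, |a - t| * rexp (-t) = rexp (-a) := by
    rw [← integral_Ioi_sub_mul_exp_neg,
      setIntegral_congr_fun measurableSet_Ioi (abs_sub_mul_exp_neg_eqOn_Ioi a)]
  have hint := integrableOn_abs_sub_mul_exp_neg ha
  rw [← Ioc_union_Ioi_eq_Ioi ha] at hint ⊢
  rw [setIntegral_union (Ioc_disjoint_Ioi le_rfl) measurableSet_Ioi
    (hint.mono_set subset_union_left) (hint.mono_set subset_union_right), hIoc, hIoi]
  ring

lemma abs_intervalIntegral_mul_exp_neg_le {φ : ℝ → ℝ} {C w : ℝ} (hw : 0 ≤ w)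
    (hφ : ∀ x ∈ Ioc 0 w, |φ x| ≤ C) :
    |∫ x in (0 : ℝ)..w, φ x * rexp (-x)| ≤ C * (1 - rexp (-w)) := by
  rw [← integral_exp_neg, ← intervalIntegral.integral_const_mul, ← Real.norm_eq_abs]
  refine intervalIntegral.norm_integral_le_of_norm_le hw (Eventually.of_forall fun x hx => ?_)
    (Continuous.intervalIntegrable (by fun_prop) _ _)
  rw [norm_mul, Real.norm_eq_abs, Real.norm_of_nonneg (exp_pos _).le]
  exact mul_le_mul_of_nonneg_right (hφ x hx) (exp_pos _).le

section Lipschitz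

variable {h : ℝ → ℝ} {L : ℝ}

lemma continuous_of_abs_sub_le (hLip : ∀ x y, |h x - h y| ≤ L * |x - y|) : Continuous h :=
  (LipschitzWith.of_dist_le_mul fun x y => by
    simpa only [Real.dist_eq] using
      (hLip x y).trans (mul_le_mul_of_nonneg_right (le_coe_toNNReal L) (abs_nonneg _))).continuous

lemma integrableOn_mul_exp_neg (hLip : ∀ x y, |h x - h y| ≤ L * |x - y|) :
    IntegrableOn (fun x => h x * rexp (-x)) (Ioi 0) := by
  have hsub : IntegrableOn (fun x => (h x - h 0) * rexp (-x)) (Ioi 0) := by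
    refine Integrable.mono' ((integrableOn_abs_sub_mul_exp_neg le_rfl).const_mul L) ?_
      (Eventually.of_forall fun x => ?_)
    · have := continuous_of_abs_sub_le hLip
      exact Continuous.aestronglyMeasurable (by fun_prop)
    · rw [norm_mul, Real.norm_eq_abs, Real.norm_of_nonneg (exp_pos _).le, abs_sub_comm 0 x,
        ← mul_assoc]
      exact mul_le_mul_of_nonneg_right (by simpa using hLip x 0) (exp_pos _).le
  exact (hsub.add ((integrableOn_exp_neg_Ioi 0).const_mul (h 0))).congr_fun
    (fun x _ => by simp only [Pi.add_apply]; ring) measurableSet_Ioi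

lemma sub_expMean_eq_integral (hint : IntegrableOn (fun x => h x * rexp (-x)) (Ioi 0)) (a : ℝ) :
    h a - expMean h = ∫ t in Ioi 0, (h a - h t) * rexp (-t) := by
  simp_rw [sub_mul]
  rw [integral_sub ((integrableOn_exp_neg_Ioi 0).const_mul _) hint, integral_const_mul,
    integral_exp_neg_Ioi_zero, mul_one, expMean]

lemma integral_sub_expMean_mul_exp_neg (hint : IntegrableOn (fun x => h x * rexp (-x)) (Ioi 0)) :
    ∫ x in Ioi 0, (h x - expMean h) * rexp (-x) = 0 := by
  simp_rw [sub_mul]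
  rw [integral_sub hint ((integrableOn_exp_neg_Ioi 0).const_mul _), integral_const_mul,
    integral_exp_neg_Ioi_zero, mul_one, expMean, sub_self]

lemma abs_sub_expMean_le (hLip : ∀ x y, |h x - h y| ≤ L * |x - y|) {a : ℝ} (ha : 0 ≤ a) :
    |h a - expMean h| ≤ L * (a - 1 + 2 * rexp (-a)) := by
  rw [sub_expMean_eq_integral (integrableOn_mul_exp_neg hLip), ← integral_abs_sub_mul_exp_neg ha,
    ← integral_const_mul, ← Real.norm_eq_abs]
  refine norm_integral_le_of_norm_le ((integrableOn_abs_sub_mul_exp_neg ha).const_mul L)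
    (Eventually.of_forall fun t => ?_)
  rw [norm_mul, Real.norm_eq_abs, Real.norm_of_nonneg (exp_pos _).le, ← mul_assoc]
  exact mul_le_mul_of_nonneg_right (hLip a t) (exp_pos _).le

lemma abs_sub_expMean_le_of_le_one (hL : 0 ≤ L) (hLip : ∀ x y, |h x - h y| ≤ L * |x - y|)
    {a : ℝ} (ha₀ : 0 ≤ a) (ha₁ : a ≤ 1) : |h a - expMean h| ≤ L := by
  have hchord : rexp (-a) ≤ 1 - a + a * rexp (-1) := by
    simpa using exp_mul_le_one_sub_add_mul_exp (-1) ha₀ ha₁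
  have hmoment : a - 1 + 2 * rexp (-a) ≤ 1 := by nlinarith [exp_neg_one_lt_half]
  exact (abs_sub_expMean_le hLip ha₀).trans (mul_le_of_le_one_right hL hmoment)

lemma abs_integral_Ioi_sub_expMean_mul_exp_neg_le (hL : 0 ≤ L)
    (hLip : ∀ x y, |h x - h y| ≤ L * |x - y|) {w : ℝ} (hw : 0 ≤ w) :
    |∫ x in Ioi w, (h x - expMean h) * rexp (-x)| ≤ L * ((w + 2 * rexp (-w)) * rexp (-w)) := by
  set c := w - 1 + 2 * rexp (-w)
  have hint : IntegrableOn (fun x => (x - w) * rexp (-x) + c * rexp (-x)) (Ioi w) :=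
    (integrableOn_Ioi_sub_mul_exp_neg w).add ((integrableOn_exp_neg_Ioi w).const_mul c)
  calc |∫ x in Ioi w, (h x - expMean h) * rexp (-x)|
      ≤ ∫ x in Ioi w, L * ((x - w) * rexp (-x) + c * rexp (-x)) := by
        rw [← Real.norm_eq_abs]
        refine norm_integral_le_of_norm_le (hint.const_mul L) ?_
        filter_upwards [ae_restrict_mem measurableSet_Ioi] with x hx
        have hexp : rexp (-x) ≤ rexp (-w) := exp_le_exp.2 (neg_le_neg hx.out.le)
        have hg := abs_sub_expMean_le hLip (hw.trans hx.out.le)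
        rw [norm_mul, Real.norm_eq_abs, Real.norm_of_nonneg (exp_pos _).le, ← add_mul, ← mul_assoc]
        refine mul_le_mul_of_nonneg_right (hg.trans ?_) (exp_pos _).le
        nlinarith
    _ = L * ((w + 2 * rexp (-w)) * rexp (-w)) := by
        rw [integral_const_mul, integral_add (integrableOn_Ioi_sub_mul_exp_neg w)
          ((integrableOn_exp_neg_Ioi w).const_mul c), integral_const_mul,
          integral_Ioi_sub_mul_exp_neg, integral_exp_neg_Ioi]
        ring

lemma steinSol_eq_intervalIntegral (hint : IntegrableOn (fun x => h x * rexp (-x)) (Ioi 0))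
    {w : ℝ} (hw : 0 ≤ w) :
    steinSol h w = rexp w / w * ∫ x in (0 : ℝ)..w, (h x - expMean h) * rexp (-x) := by
  have hint' : IntegrableOn (fun x => (h x - expMean h) * rexp (-x)) (Ioi 0) := by
    simp_rw [sub_mul]
    exact hint.sub ((integrableOn_exp_neg_Ioi 0).const_mul _)
  rw [steinSol, ← intervalIntegral.integral_Ioi_sub_Ioi hint' hw,
    integral_sub_expMean_mul_exp_neg hint]
  ring

lemma hasDerivAt_steinSol (hLip : ∀ x y, |h x - h y| ≤ L * |x - y|) {w : ℝ} (hw : 0 < w) :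
    HasDerivAt (steinSol h) ((w - 1) / w * steinSol h w + (h w - expMean h) / w) w := by
  have hg : Continuous fun x => (h x - expMean h) * rexp (-x) := by
    have := continuous_of_abs_sub_le hLip
    fun_prop
  have hJ := intervalIntegral.integral_hasDerivAt_right (hg.intervalIntegrable 0 w)
    (hg.stronglyMeasurableAtFilter _ _) hg.continuousAt
  have hq : HasDerivAt (fun u => rexp u / u) ((rexp w * w - rexp w * 1) / w ^ 2) w :=
    (hasDerivAt_exp w).div (hasDerivAt_id w) hw.ne'
  have heq : (fun u => rexp u / u * ∫ x in (0 : ℝ)..u, (h x - expMean h) * rexp (-x))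
      =ᶠ[𝓝 w] steinSol h := by
    filter_upwards [Ioi_mem_nhds hw] with u hu
    exact (steinSol_eq_intervalIntegral (integrableOn_mul_exp_neg hLip) hu.out.le).symm
  refine ((hq.mul hJ).congr_of_eventuallyEq heq.symm).congr_deriv ?_
  rw [steinSol_eq_intervalIntegral (integrableOn_mul_exp_neg hLip) hw.le, exp_neg]
  field_simp

lemma abs_steinSol_le (hL : 0 ≤ L) (hLip : ∀ x y, |h x - h y| ≤ L * |x - y|) {w : ℝ}
    (hw : 0 < w) : |steinSol h w| ≤ L * (w + 2 * rexp (-w)) / w := by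
  rw [steinSol, abs_mul, abs_neg, abs_of_pos (div_pos (exp_pos w) hw)]
  calc rexp w / w * |∫ x in Ioi w, (h x - expMean h) * rexp (-x)|
      ≤ rexp w / w * (L * ((w + 2 * rexp (-w)) * rexp (-w))) := by
        gcongr
        exact abs_integral_Ioi_sub_expMean_mul_exp_neg_le hL hLip hw.le
    _ = L * (w + 2 * rexp (-w)) / w := by
        rw [exp_neg]
        field_simp

lemma abs_steinSol_le_of_one_lt (hL : 0 ≤ L) (hLip : ∀ x y, |h x - h y| ≤ L * |x - y|)
    {w : ℝ} (hw : 1 < w) : |steinSol h w| ≤ (1 + 2 / rexp 1) * L := by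
  refine (abs_steinSol_le hL hLip (one_pos.trans hw)).trans ?_
  have hexp : rexp (-w) ≤ rexp (-1) := exp_le_exp.2 (by linarith)
  rw [div_le_iff₀ (one_pos.trans hw), div_eq_mul_inv, ← exp_neg]
  nlinarith [mul_le_mul_of_nonneg_left hexp hL, mul_nonneg hL (exp_pos (-1)).le]

lemma abs_steinSol_le_of_le_one (hL : 0 ≤ L) (hLip : ∀ x y, |h x - h y| ≤ L * |x - y|)
    {w : ℝ} (hw : 0 < w) (hw₁ : w ≤ 1) : |steinSol h w| ≤ (rexp 1 - 1) * L := by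
  have hJ := abs_intervalIntegral_mul_exp_neg_le hw.le
    fun x hx => abs_sub_expMean_le_of_le_one hL hLip hx.1.le (hx.2.trans hw₁)
  have hchord : rexp w ≤ 1 - w + w * rexp 1 := by
    simpa using exp_mul_le_one_sub_add_mul_exp 1 hw.le hw₁
  rw [steinSol_eq_intervalIntegral (integrableOn_mul_exp_neg hLip) hw.le, abs_mul,
    abs_of_pos (div_pos (exp_pos w) hw)]
  calc rexp w / w * |∫ x in (0 : ℝ)..w, (h x - expMean h) * rexp (-x)|
      ≤ rexp w / w * (L * (1 - rexp (-w))) := by gcongr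
    _ = L * (rexp w - 1) / w := by
        rw [exp_neg]
        field_simp
    _ ≤ (rexp 1 - 1) * L := by
        rw [div_le_iff₀ hw]
        nlinarith

lemma abs_deriv_steinSol_le_of_le_one (hL : 0 ≤ L) (hLip : ∀ x y, |h x - h y| ≤ L * |x - y|)
    {w : ℝ} (hw : 0 < w) (hw₁ : w ≤ 1) : |deriv (steinSol h) w| ≤ 2 * L := by
  rw [(hasDerivAt_steinSol hLip hw).deriv]
  set g := h w - expMean h
  set R := ∫ x in (0 : ℝ)..w, (h x - h w) * rexp (-x)
  set A := (1 - w) * rexp w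
  have hg : |g| ≤ L := abs_sub_expMean_le_of_le_one hL hLip hw.le hw₁
  have hR : |R| ≤ L * w * (1 - rexp (-w)) := by
    refine abs_intervalIntegral_mul_exp_neg_le hw.le fun x hx => (hLip x w).trans ?_
    rw [abs_sub_comm, abs_of_nonneg (sub_nonneg.2 hx.2)]
    nlinarith [hx.1]
  have hsplit : ∫ x in (0 : ℝ)..w, (h x - expMean h) * rexp (-x) = g * (1 - rexp (-w)) + R := by
    have hc := continuous_of_abs_sub_le hLip
    rw [← integral_exp_neg, ← intervalIntegral.integral_const_mul,
      ← intervalIntegral.integral_add (Continuous.intervalIntegrable (by fun_prop) _ _)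
        (Continuous.intervalIntegrable (by fun_prop) _ _)]
    exact intervalIntegral.integral_congr fun x _ => by ring
  have hexp : rexp w * rexp (-w) = 1 := by rw [← exp_add, add_neg_cancel, exp_zero]
  have hA₁ : A ≤ 1 := by nlinarith [one_sub_le_exp_neg w, exp_pos w]
  have hA₀ : 1 - w ^ 2 ≤ A := by nlinarith [add_one_le_exp w]
  have hAR : |A * R| ≤ L * w ^ 2 := by
    rw [abs_mul, abs_of_nonneg (mul_nonneg (sub_nonneg.2 hw₁) (exp_pos w).le)]
    calc A * |R| ≤ A * (L * w * (1 - rexp (-w))) := by gcongr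
      _ = L * w * (A - (1 - w)) := by linear_combination (-(L * w * (1 - w))) * hexp
      _ ≤ L * w ^ 2 := by nlinarith [mul_nonneg hL hw.le]
  have key : w ^ 2 * ((w - 1) / w * steinSol h w + g / w) = g * (1 - A) - A * R := by
    rw [steinSol_eq_intervalIntegral (integrableOn_mul_exp_neg hLip) hw.le, hsplit]
    field_simp
    linear_combination (g * (1 - w)) * hexp
  have hbound : |w ^ 2 * ((w - 1) / w * steinSol h w + g / w)| ≤ w ^ 2 * (2 * L) := by
    rw [key]
    calc |g * (1 - A) - A * R| ≤ |g * (1 - A)| + |A * R| := abs_sub _ _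
      _ = |g| * (1 - A) + |A * R| := by rw [abs_mul, abs_of_nonneg (sub_nonneg.2 hA₁)]
      _ ≤ L * w ^ 2 + L * w ^ 2 := by
          gcongr
          linarith
      _ = w ^ 2 * (2 * L) := by ring
  rw [abs_mul, abs_of_pos (pow_pos hw 2)] at hbound
  exact le_of_mul_le_mul_left hbound (pow_pos hw 2)

lemma abs_deriv_steinSol_le_of_one_lt (hL : 0 ≤ L) (hLip : ∀ x y, |h x - h y| ≤ L * |x - y|)
    {w : ℝ} (hw : 1 < w) : |deriv (steinSol h) w| ≤ 2 * L := by
  have hw₀ : 0 < w := one_pos.trans hw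
  rw [(hasDerivAt_steinSol hLip hw₀).deriv]
  have hb : rexp (-w) < 1 / 2 :=
    (exp_lt_exp.2 (neg_lt_neg hw)).trans exp_neg_one_lt_half
  have hf := abs_steinSol_le hL hLip hw₀
  have hg := abs_sub_expMean_le hLip hw₀.le
  calc |(w - 1) / w * steinSol h w + (h w - expMean h) / w|
      ≤ (w - 1) / w * (L * (w + 2 * rexp (-w)) / w) + L * (w - 1 + 2 * rexp (-w)) / w := by
        refine (abs_add_le _ _).trans (add_le_add ?_ ?_)
        · rw [abs_mul, abs_of_nonneg (div_nonneg (sub_nonneg.2 hw.le) hw₀.le)]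
          gcongr
        · rw [abs_div, abs_of_pos hw₀]
          gcongr
    _ ≤ 2 * L := by
        rw [div_mul_div_comm, div_add_div _ _ (by positivity) hw₀.ne',
          div_le_iff₀ (by positivity)]
        have hb' : 0 ≤ w - rexp (-w) * (2 * w - 1) := by nlinarith
        nlinarith [mul_nonneg (mul_nonneg hL hw₀.le) hb']

end Lipschitz

/-- if `h` is Lipschitz with constant `L = ‖h'‖_∞`, then the Stein
solution satisfies `sup_{w>0} |f(w)| ≤ (1 + 2/e) L` and `sup_{w>0} |f'(w)| ≤ 2 L`. -/
theorem steinSol_bounds (h : ℝ → ℝ) (L : ℝ) (hL : 0 ≤ L)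
    (hLip : ∀ x y : ℝ, |h x - h y| ≤ L * |x - y|) :
    ∀ w : ℝ, 0 < w →
      |steinSol h w| ≤ (1 + 2 / Real.exp 1) * L ∧
      ∃ f' : ℝ, HasDerivAt (steinSol h) f' w ∧ |f'| ≤ 2 * L := by
  intro w hw
  refine ⟨?_, _, (hasDerivAt_steinSol hLip hw).differentiableAt.hasDerivAt, ?_⟩
  · rcases le_or_gt w 1 with hw₁ | hw₁
    · exact (abs_steinSol_le_of_le_one hL hLip hw hw₁).trans
        (mul_le_mul_of_nonneg_right exp_one_sub_one_le_one_add_two_div_exp_one hL)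
    · exact abs_steinSol_le_of_one_lt hL hLip hw₁
  · rcases le_or_gt w 1 with hw₁ | hw₁
    · exact abs_deriv_steinSol_le_of_le_one hL hLip hw hw₁
    · exact abs_deriv_steinSol_le_of_one_lt hL hLip hw₁
end

section
/- Let n ≥ 1 and let x₁, …, x_n be real numbers such that the points e^{i x₁}, …, e^{i x_n} on the unit circle are pairwise distinct. For an integer l, define p_l = Σ_{a=1}^n e^{i l x_a}. Then for every integer j ≥ 0: Σ_{l=0}^{j} p_l · p_{j−l} = −i · Σ_{a ≠ b} cot( (x_a − x_b)/2 ) · e^{i j x_a} + (n + j) · p_j, where the sum Σ_{a≠b} runs over all ordered pairs (a,b) with 1 ≤ a, b ≤ n and a ≠ b. -/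
open Complex Finset

/-- The `l`-th power sum `p_l = Σ_{a=1}^n e^{i l x_a}` of points on the unit circle. -/
noncomputable def powerSum (n : ℕ) (x : Fin n → ℝ) (l : ℕ) : ℂ :=
  ∑ a : Fin n, Complex.exp (Complex.I * (l : ℂ) * (x a : ℂ))

/-- Key cotangent identity: `-i cot((s-t)/2) = (e^{is}+e^{it})/(e^{is}-e^{it})`. -/
lemma cot_key (s t : ℝ) (h : Complex.exp (Complex.I * s) ≠ Complex.exp (Complex.I * t)) :
    (-Complex.I) * (Real.cot ((s - t) / 2) : ℂ) =
      (Complex.exp (Complex.I * s) + Complex.exp (Complex.I * t)) /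
        (Complex.exp (Complex.I * s) - Complex.exp (Complex.I * t)) := by
  have hd : Complex.exp (Complex.I * s) - Complex.exp (Complex.I * t) ≠ 0 :=
    sub_ne_zero.mpr h
  have hsin : Real.sin ((s - t) / 2) ≠ 0 := by
    intro h0
    obtain ⟨k, hk⟩ := Real.sin_eq_zero_iff.mp h0
    apply h
    rw [Complex.exp_eq_exp_iff_exists_int]
    refine ⟨k, ?_⟩
    have hs : s = t + (k : ℝ) * (2 * Real.pi) := by linarith
    rw [hs]
    push_cast
    ring
  have hsinC : Complex.sin (((s - t) / 2 : ℝ) : ℂ) ≠ 0 := by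
    rw [← Complex.ofReal_sin]
    exact_mod_cast hsin
  rw [Complex.ofReal_cot, Complex.cot_eq_cos_div_sin, mul_div_assoc',
    div_eq_div_iff hsinC hd]
  have hEs : Complex.exp (Complex.I * s)
      = Complex.exp (Complex.I * (((s + t) / 2 : ℝ) : ℂ))
        * Complex.exp ((((s - t) / 2 : ℝ) : ℂ) * Complex.I) := by
    rw [← Complex.exp_add]
    congr 1
    push_cast
    ring
  have hEt : Complex.exp (Complex.I * t)
      = Complex.exp (Complex.I * (((s + t) / 2 : ℝ) : ℂ))
        * Complex.exp (-(((s - t) / 2 : ℝ) : ℂ) * Complex.I) := by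
    rw [← Complex.exp_add]
    congr 1
    push_cast
    ring
  rw [Complex.sin, Complex.cos, hEs, hEt]
  ring

/-- the power-sum identity
`Σ_{l=0}^{j} p_l p_{j-l} = -i Σ_{a≠b} cot((x_a - x_b)/2) e^{i j x_a} + (n + j) p_j`
for pairwise distinct points `e^{i x_a}` on the unit circle. -/
theorem powerSum_convolution_identity (n : ℕ) (hn : 1 ≤ n) (x : Fin n → ℝ)
    (hdist : ∀ a b : Fin n, a ≠ b →
      Complex.exp (Complex.I * (x a : ℂ)) ≠ Complex.exp (Complex.I * (x b : ℂ)))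
    (j : ℕ) :
    (∑ l ∈ Finset.range (j + 1), powerSum n x l * powerSum n x (j - l)) =
      (-Complex.I) *
          (∑ q ∈ (Finset.univ : Finset (Fin n)) ×ˢ (Finset.univ : Finset (Fin n)) with
              q.1 ≠ q.2,
            (Real.cot ((x q.1 - x q.2) / 2) : ℂ) *
              Complex.exp (Complex.I * (j : ℂ) * (x q.1 : ℂ)))
        + ((n : ℂ) + (j : ℂ)) * powerSum n x j := by
  classical
  set z : Fin n → ℂ := fun a => Complex.exp (Complex.I * (x a : ℂ)) with hzdef
  have hza : ∀ a : Fin n, Complex.exp (Complex.I * (x a : ℂ)) = z a := fun a => by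
    rw [hzdef]
  have hz : ∀ (l : ℕ) (a : Fin n),
      Complex.exp (Complex.I * (l : ℂ) * (x a : ℂ)) = z a ^ l := by
    intro l a
    rw [hzdef, ← Complex.exp_nat_mul]
    congr 1
    ring
  have hzne : ∀ a b : Fin n, a ≠ b → z a - z b ≠ 0 := fun a b hab =>
    sub_ne_zero.mpr (hdist a b hab)
  have hp : ∀ l : ℕ, powerSum n x l = ∑ a : Fin n, z a ^ l := by
    intro l; simp [powerSum, hz]
  set D : Finset (Fin n × Fin n) :=
    (Finset.univ ×ˢ Finset.univ).filter (fun q => q.1 ≠ q.2) with hD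
  have hmemD : ∀ q : Fin n × Fin n, q ∈ D → q.1 ≠ q.2 := by
    intro q hq
    simp only [hD, Finset.mem_filter] at hq
    exact hq.2
  -- swap symmetry on D
  have swap_sum : ∀ F : Fin n × Fin n → ℂ, ∑ q ∈ D, F (q.2, q.1) = ∑ q ∈ D, F q := by
    intro F
    apply Finset.sum_nbij' (fun q => (q.2, q.1)) (fun q => (q.2, q.1)) <;>
      simp [hD, ne_comm, eq_comm]
  -- abbreviation for the main off-diagonal sum
  set S : ℂ := ∑ q ∈ D, z q.1 ^ (j + 1) / (z q.1 - z q.2) with hS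
  -- Left-hand side computation
  have hLHS : (∑ l ∈ Finset.range (j + 1), powerSum n x l * powerSum n x (j - l))
      = ∑ q ∈ (Finset.univ ×ˢ Finset.univ : Finset (Fin n × Fin n)),
          ∑ l ∈ Finset.range (j + 1), z q.1 ^ l * z q.2 ^ (j - l) := by
    rw [Finset.sum_comm]
    refine Finset.sum_congr rfl fun l _ => ?_
    rw [hp, hp, Finset.sum_mul_sum, ← Finset.sum_product']
  -- splitting a product sum into diagonal and off-diagonal parts
  have split : ∀ F : Fin n × Fin n → ℂ,
      ∑ q ∈ (Finset.univ ×ˢ Finset.univ : Finset (Fin n × Fin n)), F q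
        = (∑ a : Fin n, F (a, a)) + ∑ q ∈ D, F q := by
    intro F
    rw [← Finset.sum_filter_add_sum_filter_not (Finset.univ ×ˢ Finset.univ)
      (fun q => q.1 = q.2)]
    congr 1
    rw [Finset.sum_filter, Finset.sum_product]
    simp
  -- diagonal value
  have hdiag : ∀ a : Fin n, (∑ l ∈ Finset.range (j + 1), z a ^ l * z a ^ (j - l))
      = ((j : ℂ) + 1) * z a ^ j := by
    intro a
    have : ∀ l ∈ Finset.range (j + 1), z a ^ l * z a ^ (j - l) = z a ^ j := by
      intro l hl
      rw [← pow_add, Nat.add_sub_cancel' (Nat.lt_succ_iff.mp (Finset.mem_range.mp hl))]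
    rw [Finset.sum_congr rfl this, Finset.sum_const, Finset.card_range, nsmul_eq_mul]
    push_cast
    ring
  -- geometric sum on off-diagonal pairs
  have geom : ∀ q ∈ D, (∑ l ∈ Finset.range (j + 1), z q.1 ^ l * z q.2 ^ (j - l))
      = z q.1 ^ (j + 1) / (z q.1 - z q.2) - z q.2 ^ (j + 1) / (z q.1 - z q.2) := by
    intro q hq
    have hab := hmemD q hq
    have h2 : (∑ l ∈ Finset.range (j + 1), z q.1 ^ l * z q.2 ^ (j - l)) * (z q.1 - z q.2)
        = z q.1 ^ (j + 1) - z q.2 ^ (j + 1) := by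
      simpa using geom_sum₂_mul (z q.1) (z q.2) (j + 1)
    rw [div_sub_div_same, eq_div_iff (hzne q.1 q.2 hab)]
    exact h2
  -- off-diagonal sum equals 2S
  have hoff : (∑ q ∈ D, (z q.1 ^ (j + 1) / (z q.1 - z q.2)
        - z q.2 ^ (j + 1) / (z q.1 - z q.2))) = 2 * S := by
    rw [Finset.sum_sub_distrib]
    have hsw := swap_sum (fun q => z q.1 ^ (j + 1) / (z q.1 - z q.2))
    simp only at hsw
    have h3 : (∑ q ∈ D, z q.2 ^ (j + 1) / (z q.1 - z q.2)) = -S := by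
      rw [hS, ← hsw, ← Finset.sum_neg_distrib]
      refine Finset.sum_congr rfl fun q _ => ?_
      rw [← div_neg, neg_sub]
    rw [h3, hS]
    ring
  -- counting sum
  have hcount : (∑ q ∈ D, z q.1 ^ j) = ((n : ℂ) - 1) * powerSum n x j := by
    rw [hD, Finset.sum_filter, Finset.sum_product]
    have h1 : ∀ a : Fin n, (∑ b : Fin n, if a ≠ b then z a ^ j else 0)
        = ((n : ℂ) - 1) * z a ^ j := by
      intro a
      rw [← Finset.sum_filter]
      have : (Finset.univ.filter (fun b => a ≠ b)) = Finset.univ.erase a := by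
        ext b
        simp [eq_comm]
      rw [this, Finset.sum_const, Finset.card_erase_of_mem (Finset.mem_univ a),
        Finset.card_univ, Fintype.card_fin, nsmul_eq_mul, Nat.cast_sub hn]
      push_cast
      ring
    rw [Finset.sum_congr rfl fun a _ => h1 a, ← Finset.mul_sum, hp]
  -- termwise cotangent identity
  have hterm : ∀ q ∈ D, (-Complex.I) * ((Real.cot ((x q.1 - x q.2) / 2) : ℂ) *
        Complex.exp (Complex.I * (j : ℂ) * (x q.1 : ℂ)))
      = 2 * (z q.1 ^ (j + 1) / (z q.1 - z q.2)) - z q.1 ^ j := by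
    intro q hq
    have hab := hmemD q hq
    rw [hz j q.1, ← mul_assoc, cot_key (x q.1) (x q.2) (hdist q.1 q.2 hab), hza, hza]
    field_simp [hzne q.1 q.2 hab]
    ring
  -- assemble
  rw [hLHS, split, Finset.sum_congr rfl (fun a _ => hdiag a), Finset.sum_congr rfl geom, hoff,
    ← Finset.mul_sum, hp j]
  have hRHS : (-Complex.I) *
      (∑ q ∈ D, (Real.cot ((x q.1 - x q.2) / 2) : ℂ) *
        Complex.exp (Complex.I * (j : ℂ) * (x q.1 : ℂ)))
      = 2 * S - ((n : ℂ) - 1) * powerSum n x j := by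
    rw [Finset.mul_sum, Finset.sum_congr rfl hterm, Finset.sum_sub_distrib,
      ← Finset.mul_sum, hcount, hS]
  rw [hRHS, hp j]
  ring
end
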